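/- For ℓ ≥ 1 and m ≥ 1, the odd cycle C_{2m+1} is (P_2 + ℓP_1)-free if and only if m ≤ ℓ. -/

import Mathlib

open SimpleGraph

/-- `G` is `k`-vertex-critical: `χ(G) = k` and deleting any vertex decreases `χ`. -/
def IsKVertexCritical {V : Type*} (G : SimpleGraph V) (k : ℕ) : Prop :=
  G.chromaticNumber = k ∧ ∀ v : V, (G.induce ({v}ᶜ : Set V)).chromaticNumber < k

/-- `G` has no induced subgraph isomorphic to `H`. -/
def InducedFree {V W : Type*} (G : SimpleGraph V) (H : SimpleGraph W) : Prop :=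
  ∀ s : Set V, IsEmpty (G.induce s ≃g H)

/-- `s` is an independent set of `G`. -/
def IsIndepSet {V : Type*} (G : SimpleGraph V) (s : Set V) : Prop :=
  s.Pairwise fun a b => ¬ G.Adj a b

/-- The graph `P_2 + ℓ P_1`: an edge together with `ℓ` isolated vertices. -/
def P2lP1 (ℓ : ℕ) : SimpleGraph (Fin (ℓ + 2)) := fromEdgeSet {s(0, 1)}

/-- The graph `P_3 + P_1`: a path on three vertices plus an isolated vertex. -/
def P3P1 : SimpleGraph (Fin 4) := fromEdgeSet {s(0, 1), s(1, 2)}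

/-- The paw: a triangle with a pendant vertex. -/
def paw : SimpleGraph (Fin 4) := fromEdgeSet {s(0, 1), s(0, 2), s(1, 2), s(2, 3)}

/-- The join of two graphs: all edges between the two sides are added. -/
def joinG {α β : Type*} (G : SimpleGraph α) (H : SimpleGraph β) : SimpleGraph (α ⊕ β) where
  Adj x y :=
    match x, y with
    | Sum.inl a, Sum.inl b => G.Adj a b
    | Sum.inr a, Sum.inr b => H.Adj a b
    | Sum.inl _, Sum.inr _ => True
    | Sum.inr _, Sum.inl _ => True
  symm := ⟨by
    rintro (a | a) (b | b) h
    · exact G.adj_symm h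
    · trivial
    · trivial
    · exact H.adj_symm h⟩
  loopless := ⟨by
    rintro (a | a) h
    · exact G.ne_of_adj h rfl
    · exact H.ne_of_adj h rfl⟩

open Finset

/-! An independent set of `C_n` is disjoint from its translate by one, so it has at most `n / 2`
vertices. In an induced copy of `P_2 + ℓP_1` the isolated vertices and one end of the edge form an
independent set of `ℓ + 1` vertices, hence `ℓ + 1 ≤ m` in `C_{2m+1}`. Conversely, for `ℓ < m` the
vertices `0, 1, 3, 5, …, 2ℓ + 1` of `C_{2m+1}` induce `P_2 + ℓP_1`. -/

theorem inducedFree_iff_not_isIndContained {V W : Type*} {G : SimpleGraph V}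
    {H : SimpleGraph W} : InducedFree G H ↔ ¬ H ⊴ G := by
  simp only [InducedFree, isIndContained_iff_exists_iso_induce, not_exists, not_nonempty_iff]
  exact forall_congr' fun s =>
    ⟨fun h => ⟨fun e => h.false e.symm⟩, fun h => ⟨fun e => h.false e.symm⟩⟩

theorem SimpleGraph.IsIndepSet.image_embedding {V W : Type*} {G : SimpleGraph V}
    {H : SimpleGraph W} (f : G ↪g H) {s : Set V} (hs : G.IsIndepSet s) :
    H.IsIndepSet (f '' s) := by
  rintro _ ⟨a, ha, rfl⟩ _ ⟨b, hb, rfl⟩ hab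
  rw [f.map_adj_iff]
  exact hs ha hb fun h => hab (congrArg f h)

theorem P2lP1_adj {ℓ : ℕ} {a b : Fin (ℓ + 2)} :
    (P2lP1 ℓ).Adj a b ↔ a.val = 0 ∧ b.val = 1 ∨ a.val = 1 ∧ b.val = 0 := by
  simp only [P2lP1, fromEdgeSet_adj, Set.mem_singleton_iff, Sym2.eq_iff, Fin.ext_iff, Fin.val_zero,
    Fin.val_one]
  omega

theorem P2lP1_isIndepSet_compl_zero (ℓ : ℕ) : (P2lP1 ℓ).IsIndepSet ({0}ᶜ : Set (Fin (ℓ + 2))) := by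
  intro a ha b _ _
  simp only [Set.mem_compl_iff, Set.mem_singleton_iff, Fin.ext_iff, Fin.val_zero] at ha
  grind [P2lP1_adj]

theorem cycleGraph_adj_iff_val {n : ℕ} {u v : Fin (n + 2)} :
    (cycleGraph (n + 2)).Adj u v ↔
      u.val + 1 = v.val ∨ v.val + 1 = u.val ∨ u.val = 0 ∧ v.val = n + 1 ∨
        v.val = 0 ∧ u.val = n + 1 := by
  rw [cycleGraph_adj']
  rcases lt_trichotomy u v with h | rfl | h
  · rw [Fin.coe_sub_iff_lt.mpr h, Fin.coe_sub_iff_le.mpr h.le]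
    omega
  · simp only [sub_self, Fin.val_zero]
    omega
  · rw [Fin.coe_sub_iff_le.mpr h.le, Fin.coe_sub_iff_lt.mpr h]
    omega

theorem cycleGraph_adj_add_one {n : ℕ} (v : Fin (n + 2)) : (cycleGraph (n + 2)).Adj (v + 1) v := by
  simp [cycleGraph_adj]

theorem two_mul_card_le_of_isIndepSet_cycleGraph {n : ℕ} {s : Finset (Fin (n + 2))}
    (hs : (cycleGraph (n + 2)).IsIndepSet s) : 2 * #s ≤ n + 2 := by
  have hdisj : Disjoint s (s.map (addRightEmbedding 1)) := by
    rw [Finset.disjoint_left]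
    intro v hv hv'
    obtain ⟨u, hu, rfl⟩ := mem_map.mp hv'
    exact hs hv hu (cycleGraph_adj_add_one u).ne (cycleGraph_adj_add_one u)
  calc 2 * #s = #(s ∪ s.map (addRightEmbedding 1)) := by
        rw [card_union_of_disjoint hdisj, card_map, two_mul]
    _ ≤ n + 2 := by simpa using card_le_univ (s ∪ s.map (addRightEmbedding 1))

theorem P2lP1_isIndContained_cycleGraph {ℓ n : ℕ} (h : 2 * ℓ + 1 ≤ n) :
    P2lP1 ℓ ⊴ cycleGraph (n + 2) := by
  -- `2 * 0 - 1 = 0` in `ℕ`: the edge goes to `0, 1` and the isolated vertices to `3, 5, …, 2ℓ + 1`.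
  let f : Fin (ℓ + 2) → Fin (n + 2) := fun i => ⟨2 * i.val - 1, by omega⟩
  refine ⟨⟨⟨f, fun a b hab => ?_⟩, fun {a b} => ?_⟩⟩
  · simp only [f, Fin.mk.injEq] at hab
    omega
  · change (cycleGraph (n + 2)).Adj (f a) (f b) ↔ _
    simp only [f, cycleGraph_adj_iff_val, P2lP1_adj]
    omega

theorem odd_cycle_P2lP1_free_iff_general (ℓ m : ℕ) (hm : 1 ≤ m) :
    InducedFree (cycleGraph (2 * m + 1)) (P2lP1 ℓ) ↔ m ≤ ℓ := by
  obtain ⟨k, rfl⟩ : ∃ k, m = k + 1 := ⟨m - 1, by omega⟩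
  rw [show 2 * (k + 1) + 1 = 2 * k + 1 + 2 by ring, inducedFree_iff_not_isIndContained]
  constructor
  · intro hfree
    by_contra! hlt
    exact hfree (P2lP1_isIndContained_cycleGraph (by omega))
  · rintro hle ⟨e⟩
    have hindep :
        (cycleGraph (2 * k + 1 + 2)).IsIndepSet ↑(({0}ᶜ : Finset _).map e.toEmbedding) := by
      rw [coe_map, coe_compl, coe_singleton]
      exact (P2lP1_isIndepSet_compl_zero ℓ).image_embedding e
    have hcard := two_mul_card_le_of_isIndepSet_cycleGraph hindep
    rw [card_map, card_compl, card_singleton, Fintype.card_fin] at hcard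
    omega

theorem odd_cycle_P2lP1_free_iff (ℓ m : ℕ) (hℓ : 1 ≤ ℓ) (hm : 1 ≤ m) :
    InducedFree (cycleGraph (2 * m + 1)) (P2lP1 ℓ) ↔ m ≤ ℓ :=
  odd_cycle_P2lP1_free_iff_general ℓ m hm
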